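/- (Theorem 1.) If the final reward ρ_T : Δ(S) → ℝ is convex on Δ(S) and, for every t ∈ {0, …, T−1} and every joint action a ∈ A, the reward b ↦ ρ_t(b, a) is convex on Δ(S), then the value function of any finite-horizon policy graph is convex in the belief: V_T is convex on Δ(S), and for every t ∈ {0, …, T−1} and every node q ∈ Q_t, the function b ↦ V_t(b, q) is convex on Δ(S). -/

import Mathlib

/-!
The posterior is a normalization: `ζ(b, z) = η(b, z)⁻¹ • N_z b` with `N_z` linear in `b` and
`η(b, z)` the total mass of `N_z b`. Hence `b ↦ η(b, z) · f (ζ(b, z))` is the perspective of `f`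
precomposed with a linear map, and the perspective of a convex function is convex. A Bellman
backup is a convex reward plus a finite sum of such terms, so backward induction over the horizon
propagates convexity from `ρ_T` to every `V_t(·, q)`.
-/

def simplex (S : Type*) [Fintype S] : Set (S → ℝ) :=
  {b | (∀ s, 0 ≤ b s) ∧ ∑ s, b s = 1}

noncomputable def eta {S Z : Type*} [Fintype S] (Ps : S → S → ℝ) (Pz : S → Z → ℝ)
    (b : S → ℝ) (z : Z) : ℝ :=
  ∑ s', Pz s' z * ∑ s, Ps s s' * b s

noncomputable def zeta {S Z : Type*} [Fintype S] (Ps : S → S → ℝ) (Pz : S → Z → ℝ)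
    (b : S → ℝ) (z : Z) : S → ℝ :=
  fun s' => Pz s' z * (∑ s, Ps s s' * b s) / eta Ps Pz b z

open Finset

theorem ConvexOn.fun_sum {𝕜 E β ι : Type*} [Semiring 𝕜] [PartialOrder 𝕜] [AddCommMonoid E]
    [AddCommMonoid β] [PartialOrder β] [IsOrderedAddMonoid β] [SMul 𝕜 E] [Module 𝕜 β]
    {s : Set E} (hs : Convex 𝕜 s) {t : Finset ι} {f : ι → E → β}
    (hf : ∀ i ∈ t, ConvexOn 𝕜 s (f i)) : ConvexOn 𝕜 s (fun x => ∑ i ∈ t, f i x) := by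
  classical
  induction t using Finset.induction with
  | empty => simpa using convexOn_const (0 : β) hs
  | insert i t hi ih =>
    simp only [sum_insert hi]
    exact (hf i (mem_insert_self i t)).add (ih fun j hj => hf j (mem_insert_of_mem hj))

theorem smul_add_smul_normalize {E : Type*} [AddCommGroup E] [Module ℝ E] (x y : E)
    {a b p q : ℝ} (hp : p ≠ 0) (hq : q ≠ 0) :
    (a * p + b * q)⁻¹ • (a • x + b • y) =
      (a * p / (a * p + b * q)) • (p⁻¹ • x) + (b * q / (a * p + b * q)) • (q⁻¹ • y) := by
  simp only [smul_add, smul_smul]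
  congr 2 <;> field_simp

theorem ConvexOn.perspective {E : Type*} [AddCommGroup E] [Module ℝ E] {t : Set E}
    {f : E → ℝ} (hf : ConvexOn ℝ t f) (φ : E →ₗ[ℝ] ℝ) :
    ConvexOn ℝ {y | 0 < φ y ∧ (φ y)⁻¹ • y ∈ t} (fun y => φ y * f ((φ y)⁻¹ • y)) := by
  refine ⟨fun x hx y hy a b ha hb hab => ?_, fun x hx y hy a b ha hb hab => ?_⟩ <;>
    have hN : 0 < a * φ x + b * φ y := convex_Ioi (0 : ℝ) hx.1 hy.1 ha hb hab <;>
    simp only [Set.mem_ofPred_eq, map_add, map_smul, smul_eq_mul,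
      smul_add_smul_normalize x y hx.1.ne' hy.1.ne']
  · exact ⟨hN, convex_iff_div.1 hf.1 hx.2 hy.2 (mul_nonneg ha hx.1.le)
      (mul_nonneg hb hy.1.le) hN⟩
  · calc (a * φ x + b * φ y) * f ((a * φ x / (a * φ x + b * φ y)) • ((φ x)⁻¹ • x) +
            (b * φ y / (a * φ x + b * φ y)) • ((φ y)⁻¹ • y))
        ≤ (a * φ x + b * φ y) * ((a * φ x / (a * φ x + b * φ y)) * f ((φ x)⁻¹ • x) +
            (b * φ y / (a * φ x + b * φ y)) * f ((φ y)⁻¹ • y)) :=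
          mul_le_mul_of_nonneg_left ((convexOn_iff_div.1 hf).2 hx.2 hy.2
            (mul_nonneg ha hx.1.le) (mul_nonneg hb hy.1.le) hN) hN.le
      _ = a * (φ x * f ((φ x)⁻¹ • x)) + b * (φ y * f ((φ y)⁻¹ • y)) := by
          field_simp

theorem convex_simplex (S : Type*) [Fintype S] : Convex ℝ (simplex S) :=
  convex_stdSimplex ℝ S

section BayesFilter

variable {S Z : Type*} [Fintype S] (Ps : S → S → ℝ) (Pz : S → Z → ℝ)

def bayesNumerator (z : Z) : (S → ℝ) →ₗ[ℝ] S → ℝ where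
  toFun b s' := Pz s' z * ∑ s, Ps s s' * b s
  map_add' b c := by
    ext s'
    simp only [Pi.add_apply, mul_add, sum_add_distrib]
  map_smul' r b := by
    ext s'
    simp only [Pi.smul_apply, smul_eq_mul, RingHom.id_apply, mul_sum]
    exact sum_congr rfl fun s _ => by ring

def totalMass : (S → ℝ) →ₗ[ℝ] ℝ := ∑ s, LinearMap.proj s

theorem totalMass_apply (b : S → ℝ) : totalMass b = ∑ s, b s := by
  simp [totalMass]

theorem eta_eq_totalMass (b : S → ℝ) (z : Z) :
    eta Ps Pz b z = totalMass (bayesNumerator Ps Pz z b) :=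
  (totalMass_apply _).symm

theorem zeta_eq_inv_smul (b : S → ℝ) (z : Z) :
    zeta Ps Pz b z = (eta Ps Pz b z)⁻¹ • bayesNumerator Ps Pz z b :=
  funext fun _ => div_eq_inv_mul _ _

variable {Ps Pz}

theorem predicted_mem_simplex (hPs0 : ∀ s s', 0 ≤ Ps s s') (hPs1 : ∀ s, ∑ s', Ps s s' = 1)
    {b : S → ℝ} (hb : b ∈ simplex S) : (fun s' => ∑ s, Ps s s' * b s) ∈ simplex S := by
  refine ⟨fun s' => sum_nonneg fun s _ => mul_nonneg (hPs0 s s') (hb.1 s), ?_⟩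
  rw [sum_comm]
  simp only [← sum_mul, hPs1, one_mul, hb.2]

theorem eta_pos (hPs0 : ∀ s s', 0 ≤ Ps s s') (hPs1 : ∀ s, ∑ s', Ps s s' = 1)
    (hPz0 : ∀ s' z, 0 < Pz s' z) {b : S → ℝ} (hb : b ∈ simplex S) (z : Z) :
    0 < eta Ps Pz b z := by
  obtain ⟨hpred0, hpred1⟩ := predicted_mem_simplex hPs0 hPs1 hb
  obtain ⟨s', -, hs'⟩ : ∃ s' ∈ univ, (0 : ℝ) < ∑ s, Ps s s' * b s :=
    exists_lt_of_sum_lt (by simp [hpred1])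
  exact sum_pos' (fun s' _ => mul_nonneg (hPz0 s' z).le (hpred0 s'))
    ⟨s', mem_univ s', mul_pos (hPz0 s' z) hs'⟩

theorem zeta_mem_simplex (hPs0 : ∀ s s', 0 ≤ Ps s s') (hPs1 : ∀ s, ∑ s', Ps s s' = 1)
    (hPz0 : ∀ s' z, 0 < Pz s' z) {b : S → ℝ} (hb : b ∈ simplex S) (z : Z) :
    zeta Ps Pz b z ∈ simplex S := by
  have hη := eta_pos hPs0 hPs1 hPz0 hb z
  refine ⟨fun s' => div_nonneg (mul_nonneg (hPz0 s' z).le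
    ((predicted_mem_simplex hPs0 hPs1 hb).1 s')) hη.le, ?_⟩
  rw [zeta_eq_inv_smul, eta_eq_totalMass, ← totalMass_apply, map_smul, smul_eq_mul,
    inv_mul_cancel₀ (eta_eq_totalMass Ps Pz b z ▸ hη).ne']

theorem convexOn_eta_mul_comp_zeta (hPs0 : ∀ s s', 0 ≤ Ps s s')
    (hPs1 : ∀ s, ∑ s', Ps s s' = 1) (hPz0 : ∀ s' z, 0 < Pz s' z) (z : Z)
    {f : (S → ℝ) → ℝ} (hf : ConvexOn ℝ (simplex S) f) :
    ConvexOn ℝ (simplex S) (fun b => eta Ps Pz b z * f (zeta Ps Pz b z)) := by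
  refine (((hf.perspective totalMass).comp_linearMap (bayesNumerator Ps Pz z)).subset
    (fun b hb => ?_) (convex_simplex S)).congr fun b _ => ?_
  · simp only [Set.mem_preimage, Set.mem_ofPred_eq, ← eta_eq_totalMass, ← zeta_eq_inv_smul]
    exact ⟨eta_pos hPs0 hPs1 hPz0 hb z, zeta_mem_simplex hPs0 hPs1 hPz0 hb z⟩
  · simp only [Function.comp_apply, ← eta_eq_totalMass, ← zeta_eq_inv_smul]

theorem convexOn_bellmanBackup [Fintype Z] (hPs0 : ∀ s s', 0 ≤ Ps s s')
    (hPs1 : ∀ s, ∑ s', Ps s s' = 1) (hPz0 : ∀ s' z, 0 < Pz s' z)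
    {r : (S → ℝ) → ℝ} {f : Z → (S → ℝ) → ℝ} (hr : ConvexOn ℝ (simplex S) r)
    (hf : ∀ z, ConvexOn ℝ (simplex S) (f z)) :
    ConvexOn ℝ (simplex S) (fun b => r b + ∑ z, eta Ps Pz b z * f z (zeta Ps Pz b z)) :=
  hr.add <| ConvexOn.fun_sum (convex_simplex S) fun z _ =>
    convexOn_eta_mul_comp_zeta hPs0 hPs1 hPz0 z (hf z)

end BayesFilter

theorem value_function_convexOn_general
    {S Z A : Type*} [Fintype S] [Fintype Z]
    (Ps : A → S → S → ℝ) (Pz : A → S → Z → ℝ)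
    (hPs0 : ∀ a s s', 0 ≤ Ps a s s') (hPs1 : ∀ a s, ∑ s', Ps a s s' = 1)
    (hPz0 : ∀ a s' z, 0 < Pz a s' z)
    (T : ℕ)
    (Q : ℕ → Type)
    (γ : ∀ t, Q t → A) (lam : ∀ t, Q t → Z → Q (t + 1))
    (ρ : ℕ → (S → ℝ) → A → ℝ) (ρT : (S → ℝ) → ℝ)
    (hρT : ConvexOn ℝ (simplex S) ρT)
    (hρ : ∀ t < T, ∀ a : A, ConvexOn ℝ (simplex S) (fun b => ρ t b a))
    (V : ∀ t, (S → ℝ) → Q t → ℝ)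
    (hVlast : ∀ (b : S → ℝ) (q : Q (T - 1)),
      V (T - 1) b q = ρ (T - 1) b (γ (T - 1) q) +
        ∑ z, eta (Ps (γ (T - 1) q)) (Pz (γ (T - 1) q)) b z *
          ρT (zeta (Ps (γ (T - 1) q)) (Pz (γ (T - 1) q)) b z))
    (hVstep : ∀ t, t < T - 1 → ∀ (b : S → ℝ) (q : Q t),
      V t b q = ρ t b (γ t q) +
        ∑ z, eta (Ps (γ t q)) (Pz (γ t q)) b z *
          V (t + 1) (zeta (Ps (γ t q)) (Pz (γ t q)) b z) (lam t q z)) :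
    ConvexOn ℝ (simplex S) ρT ∧
      ∀ t < T, ∀ q : Q t, ConvexOn ℝ (simplex S) (fun b => V t b q) := by
  refine ⟨hρT, fun t ht => ?_⟩
  have hT : T - 1 < T := by omega
  induction Nat.le_sub_one_of_lt ht using Nat.decreasingInduction with
  | self =>
    intro q
    exact (convexOn_bellmanBackup (hPs0 _) (hPs1 _) (hPz0 _) (hρ (T - 1) hT _)
      fun _ => hρT).congr fun b _ => (hVlast b q).symm
  | of_succ t hlt ih =>
    intro q
    exact (convexOn_bellmanBackup (hPs0 _) (hPs1 _) (hPz0 _) (hρ t (by omega) _)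
      fun z => ih (by omega) (lam t q z)).congr fun b _ => (hVstep t hlt b q).symm

/-- **Theorem 1.** If the final reward `ρT` is convex on `Δ(S)` and each per-step reward
`b ↦ ρ t b a` is convex on `Δ(S)`, then the value function of any finite-horizon policy
graph is convex in the belief: `V_T = ρT` is convex on `Δ(S)`, and for every `t < T`
and every node `q : Q t`, the function `b ↦ V t b q` is convex on `Δ(S)`. -/
theorem value_function_convexOn
    {S Z A : Type*} [Fintype S] [Fintype Z] [Fintype A]
    [Nonempty S] [Nonempty Z] [Nonempty A]
    (Ps : A → S → S → ℝ) (Pz : A → S → Z → ℝ)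
    (hPs0 : ∀ a s s', 0 ≤ Ps a s s') (hPs1 : ∀ a s, ∑ s', Ps a s s' = 1)
    (hPz0 : ∀ a s' z, 0 < Pz a s' z) (hPz1 : ∀ a s', ∑ z, Pz a s' z = 1)
    (T : ℕ) (hT : 1 ≤ T)
    (Q : ℕ → Type) [∀ t, Nonempty (Q t)]
    (γ : ∀ t, Q t → A) (lam : ∀ t, Q t → Z → Q (t + 1))
    (ρ : ℕ → (S → ℝ) → A → ℝ) (ρT : (S → ℝ) → ℝ)
    (hρT : ConvexOn ℝ (simplex S) ρT)
    (hρ : ∀ t < T, ∀ a : A, ConvexOn ℝ (simplex S) (fun b => ρ t b a))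
    (V : ∀ t, (S → ℝ) → Q t → ℝ)
    (hVlast : ∀ (b : S → ℝ) (q : Q (T - 1)),
      V (T - 1) b q = ρ (T - 1) b (γ (T - 1) q) +
        ∑ z, eta (Ps (γ (T - 1) q)) (Pz (γ (T - 1) q)) b z *
          ρT (zeta (Ps (γ (T - 1) q)) (Pz (γ (T - 1) q)) b z))
    (hVstep : ∀ t, t < T - 1 → ∀ (b : S → ℝ) (q : Q t),
      V t b q = ρ t b (γ t q) +
        ∑ z, eta (Ps (γ t q)) (Pz (γ t q)) b z *
          V (t + 1) (zeta (Ps (γ t q)) (Pz (γ t q)) b z) (lam t q z)) :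
    ConvexOn ℝ (simplex S) ρT ∧
      ∀ t < T, ∀ q : Q t, ConvexOn ℝ (simplex S) (fun b => V t b q) :=
  value_function_convexOn_general Ps Pz hPs0 hPs1 hPz0 T Q γ lam ρ ρT hρT hρ V hVlast hVstep
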